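/- arXiv:2507.22732 — 4 statements merged into one kernel-verified Lean document; each statement's English description precedes it below -/
import Mathlib

section
/- Let r_s, r_t, w_s, w_t > 0 and α > 1, and set r_s' = α·r_s, w_s' = α·w_s. Suppose ∂r_s > 0 and 0 < ∂r_t < r_t satisfy (r_s + ∂r_s)^{w_s}·(r_t - ∂r_t)^{w_t} = r_s^{w_s}·r_t^{w_t}. Then (r_s' + ∂r_s)^{w_s'}·(r_t - ∂r_t)^{w_t} > (r_s')^{w_s'}·r_t^{w_t}. -/
theorem demm_provision_improves_sell (rs rt ws wt α drs drt : ℝ)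
    (hrs : 0 < rs) (hrt : 0 < rt) (hws : 0 < ws) (hwt : 0 < wt) (hα : 1 < α)
    (hdrs : 0 < drs) (hdrt0 : 0 < drt) (hdrt : drt < rt)
    (htrade : (rs + drs) ^ ws * (rt - drt) ^ wt = rs ^ ws * rt ^ wt) :
    (α * rs + drs) ^ (α * ws) * (rt - drt) ^ wt > (α * rs) ^ (α * ws) * rt ^ wt := by
  have hα0 : (0:ℝ) < α := by linarith
  have hαrs : 0 < α * rs := by positivity
  set y : ℝ := drs / (α * rs) with hy_def
  have hy : 0 < y := by positivity
  have hbern : 1 + α * y < (1 + y) ^ α :=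
    one_add_mul_self_lt_rpow_one_add (by linarith) (ne_of_gt hy) hα
  have hαy : α * y = drs / rs := by
    field_simp [hy_def]; rw [hy_def]; field_simp
  have key : ((rs + drs) / rs) ^ ws < ((α * rs + drs) / (α * rs)) ^ (α * ws) := by
    have h1 : (rs + drs) / rs = 1 + α * y := by rw [hαy]; field_simp
    have h2 : (α * rs + drs) / (α * rs) = 1 + y := by field_simp [hy_def]; rw [hy_def]; field_simp
    rw [h1, h2, Real.rpow_mul (by linarith : (0:ℝ) ≤ 1 + y) α ws]
    exact Real.rpow_lt_rpow (by nlinarith [mul_pos hα0 hy]) hbern hws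
  rw [Real.div_rpow (by linarith) hrs.le, Real.div_rpow (by linarith) hαrs.le] at key
  have hP : 0 < rs ^ ws := Real.rpow_pos_of_pos hrs ws
  have hQ : 0 < (rs + drs) ^ ws := Real.rpow_pos_of_pos (by linarith) ws
  have hR : 0 < (α * rs) ^ (α * ws) := Real.rpow_pos_of_pos hαrs _
  have hS : 0 < (α * rs + drs) ^ (α * ws) := Real.rpow_pos_of_pos (by linarith) _
  have hA : 0 < (rt - drt) ^ wt := Real.rpow_pos_of_pos (by linarith) wt
  rw [div_lt_div_iff₀ hP hR] at key
  nlinarith [mul_pos hR hA, mul_pos hP hA]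
end

section
/- Let r_s, r_t, w_s, w_t > 0 and α > 1, and set r_s' = α·r_s, w_s' = α·w_s. Suppose 0 < ∂r_s < r_s and ∂r_t > 0 satisfy (r_s - ∂r_s)^{w_s}·(r_t + ∂r_t)^{w_t} = r_s^{w_s}·r_t^{w_t}. Then (r_s' - ∂r_s)^{w_s'}·(r_t + ∂r_t)^{w_t} > (r_s')^{w_s'}·r_t^{w_t}. -/
open Real

theorem demm_provision_improves_buy (rs rt ws wt α drs drt : ℝ)
    (hrs : 0 < rs) (hrt : 0 < rt) (hws : 0 < ws) (hwt : 0 < wt) (hα : 1 < α)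
    (hdrs0 : 0 < drs) (hdrs : drs < rs) (hdrt : 0 < drt)
    (htrade : (rs - drs) ^ ws * (rt + drt) ^ wt = rs ^ ws * rt ^ wt) :
    (α * rs - drs) ^ (α * ws) * (rt + drt) ^ wt > (α * rs) ^ (α * ws) * rt ^ wt := by
  have hα0 : (0:ℝ) < α := by linarith
  have hαrs : 0 < α * rs := by positivity
  set u := drs / (α * rs) with hu
  set v := drs / rs with hv
  have hu0 : 0 < u := by positivity
  have hv1 : v < 1 := (div_lt_one hrs).mpr hdrs
  have huv : α * u = v := by rw [hu, hv]; field_simp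
  have huv' : u < v := by
    rw [hu, hv]
    exact div_lt_div_of_pos_left hdrs0 hrs ((lt_mul_iff_one_lt_left hrs).mpr hα)
  have hu1 : u < 1 := huv'.trans hv1
  have h1v : (0:ℝ) < 1 - v := by linarith
  have h1u : (0:ℝ) < 1 - u := by linarith
  -- strict Bernoulli inequality
  have h1 : 1 - v < (1 - u) ^ α := by
    have h := one_add_mul_self_lt_rpow_one_add (show (-1:ℝ) ≤ -u by linarith)
      (neg_ne_zero.mpr hu0.ne') hα
    have e : 1 + α * (-u) = 1 - v := by rw [mul_neg, huv]; ring
    rw [e] at h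
    rwa [← sub_eq_add_neg] at h
  -- raise to the power ws
  have h2 : (1 - v) ^ ws < (1 - u) ^ (α * ws) := by
    have h := rpow_lt_rpow h1v.le h1 hws
    rwa [← Real.rpow_mul h1u.le] at h
  -- rewrite bases
  have eA : rs - drs = rs * (1 - v) := by rw [hv]; field_simp
  have eB : α * rs - drs = (α * rs) * (1 - u) := by rw [hu]; field_simp
  have hrdt : (0:ℝ) < rt + drt := by linarith
  -- from the trade equation
  have ht : (1 - v) ^ ws * (rt + drt) ^ wt = rt ^ wt := by
    rw [eA, Real.mul_rpow hrs.le h1v.le] at htrade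
    have hrsw : (0:ℝ) < rs ^ ws := rpow_pos_of_pos hrs ws
    have := htrade
    field_simp at this
    nlinarith [this, hrsw]
  -- conclude
  rw [eB, Real.mul_rpow hαrs.le h1u.le, mul_assoc]
  have hB : (0:ℝ) < (α * rs) ^ (α * ws) := rpow_pos_of_pos hαrs _
  have key : (1 - u) ^ (α * ws) * (rt + drt) ^ wt > rt ^ wt := by
    calc (1 - u) ^ (α * ws) * (rt + drt) ^ wt
        > (1 - v) ^ ws * (rt + drt) ^ wt :=
          mul_lt_mul_of_pos_right h2 (rpow_pos_of_pos hrdt wt)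
      _ = rt ^ wt := ht
  exact mul_lt_mul_of_pos_left key hB
end

section
/- Let r_s, r_t, w_s, w_t > 0 (state at deposit time) and r_s', r_t', w_s', w_t' > 0 (state at withdrawal time). A liquidity provider deposits Δr_s, Δr_t > 0 tokens, receiving ℓ_s = (Δr_s/r_s)·w_s LP tokens s and ℓ_t = (Δr_t/r_t)·w_t LP tokens t, and later redeems them for a_s = r_s'·ℓ_s/w_s' tokens s and a_t = r_t'·ℓ_t/w_t' tokens t. If the unit prices satisfy p_s/p_t = (w_s/r_s)/(w_t/r_t) at deposit and p_s'/p_t' = (w_s'/r_s')/(w_t'/r_t') at withdrawal, then (a_s·p_s')/(a_t·p_t') = (Δr_s·p_s)/(Δr_t·p_t); i.e., the ratio of total values of the two tokens received at withdrawal equals the ratio at deposit. -/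
theorem demm_preserves_deposit_value_ratio
    (rs rt ws wt rs' rt' ws' wt' drs drt ps pt ps' pt' : ℝ)
    (hrs : 0 < rs) (hrt : 0 < rt) (hws : 0 < ws) (hwt : 0 < wt)
    (hrs' : 0 < rs') (hrt' : 0 < rt') (hws' : 0 < ws') (hwt' : 0 < wt')
    (hdrs : 0 < drs) (hdrt : 0 < drt)
    (hps : 0 < ps) (hpt : 0 < pt) (hps' : 0 < ps') (hpt' : 0 < pt')
    (hprice : ps / pt = (ws / rs) / (wt / rt))
    (hprice' : ps' / pt' = (ws' / rs') / (wt' / rt'))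
    (ls lt as' at' : ℝ)
    (hls : ls = (drs / rs) * ws) (hlt : lt = (drt / rt) * wt)
    (has : as' = rs' * ls / ws') (hat : at' = rt' * lt / wt') :
    (as' * ps') / (at' * pt') = (drs * ps) / (drt * pt) := by
  subst hls hlt has hat
  rw [div_eq_div_iff (by positivity) (by positivity)] at hprice hprice' ⊢
  field_simp at hprice hprice' ⊢
  linear_combination (-(ps'*wt'*rs')) * hprice + (ps*wt*rs) * hprice'
end

section
/- For fixed w_i, w_o, ∂r_i > 0 and a fixed price ratio, scaling the reserves as r_i ↦ λr_i and r_o ↦ λr_o with λ > 1 strictly increases the output ∂r_o, i.e. λr_o·(1 − (λr_i/(λr_i+∂r_i))^{w_i/w_o}) > r_o·(1 − (r_i/(r_i+∂r_i))^{w_i/w_o}). -/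
/-- Key inequality: for `u ∈ (0,1)` and `p > 0`, `u^p * (1 + p*(1-u)) < 1`. -/
lemma key_ineq (u p : ℝ) (hu0 : 0 < u) (hu1 : u < 1) (hp : 0 < p) :
    u ^ p * (1 + p * (1 - u)) < 1 := by
  have hup : (0:ℝ) < u ^ p := Real.rpow_pos_of_pos hu0 p
  have hlog : Real.log u < u - 1 := Real.log_lt_sub_one_of_pos hu0 (ne_of_lt hu1)
  have hlogneg : Real.log u < 0 := Real.log_neg hu0 hu1
  -- u^(-p) = exp (log u * (-p)) > 1 + (-p * log u) > 1 + p*(1-u)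
  have h1 : 1 + p * (1 - u) < u ^ (-p) := by
    have hexp : Real.log u * (-p) + 1 < Real.exp (Real.log u * (-p)) := by
      apply Real.add_one_lt_exp
      have : Real.log u * (-p) > 0 := by nlinarith
      linarith
    have hrw : u ^ (-p) = Real.exp (Real.log u * (-p)) :=
      Real.rpow_def_of_pos hu0 (-p)
    have h2 : p * (1 - u) < Real.log u * (-p) := by nlinarith
    linarith [hrw ▸ hexp]
  have hmul := (mul_lt_mul_iff_right₀ hup).2 h1
  have : u ^ p * u ^ (-p) = 1 := by
    rw [← Real.rpow_add hu0]; simp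
  linarith [this ▸ hmul]

/-- Strict monotonicity of `s ↦ s * (1 - (s/(s+d))^p)` on `(0, ∞)`. -/
lemma phi_strictMono (d p : ℝ) (hd : 0 < d) (hp : 0 < p) :
    StrictMonoOn (fun s : ℝ => s * (1 - (s / (s + d)) ^ p)) (Set.Ioi 0) := by
  have hderiv : ∀ s ∈ interior (Set.Ioi (0:ℝ)),
      HasDerivAt (fun s : ℝ => s * (1 - (s / (s + d)) ^ p))
        (1 - (s/(s+d))^p * (1 + p * (1 - s/(s+d)))) s := by
    intro s hs
    rw [interior_Ioi] at hs
    have hs0 : (0:ℝ) < s := hs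
    have hsd : (0:ℝ) < s + d := by linarith
    have hu0 : (0:ℝ) < s / (s + d) := div_pos hs0 hsd
    -- derivative of s ↦ s/(s+d) is d/(s+d)^2
    have h1 : HasDerivAt (fun s : ℝ => s / (s + d))
        ((1 * (s + d) - s * 1) / (s + d) ^ 2) s := by
      exact (hasDerivAt_id s).div ((hasDerivAt_id s).add_const d) (ne_of_gt hsd)
    have h1' : HasDerivAt (fun s : ℝ => s / (s + d)) (d / (s + d) ^ 2) s := by
      convert h1 using 1; ring
    -- derivative of rpow
    have h2 : HasDerivAt (fun x : ℝ => x ^ p) (p * (s/(s+d)) ^ (p - 1)) (s/(s+d)) :=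
      Real.hasDerivAt_rpow_const (Or.inl (ne_of_gt hu0))
    have h3 : HasDerivAt (fun s : ℝ => (s / (s + d)) ^ p)
        (p * (s/(s+d)) ^ (p - 1) * (d / (s + d) ^ 2)) s := by
      have := h2.comp s h1'; exact this
    have h4 : HasDerivAt (fun s : ℝ => 1 - (s / (s + d)) ^ p)
        (-(p * (s/(s+d)) ^ (p - 1) * (d / (s + d) ^ 2))) s := by
      have := (hasDerivAt_const s (1:ℝ)).sub h3
      exact this.congr_deriv (by ring)
    have h5 := (hasDerivAt_id s).mul h4
    refine h5.congr_deriv ?_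
    have hup : (s/(s+d)) ^ (p - 1) = (s/(s+d)) ^ p / (s/(s+d)) := by
      rw [Real.rpow_sub hu0, Real.rpow_one]
    have key : s * (p * (s/(s+d)) ^ (p - 1) * (d / (s + d) ^ 2))
        = (s/(s+d))^p * (p * (1 - s/(s+d))) := by
      rw [hup]
      have h1u : 1 - s/(s+d) = d/(s+d) := by field_simp; ring
      rw [h1u]
      field_simp
    simp only [id]
    nlinarith [key]
  apply strictMonoOn_of_hasDerivWithinAt_pos (convex_Ioi 0)
    (fun s hs => ((hderiv s (by rwa [interior_Ioi])).differentiableAt.continuousAt.continuousWithinAt))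
    (fun s hs => ((hderiv s hs).hasDerivWithinAt))
    (fun s hs => by
      rw [interior_Ioi] at hs
      have hs0 : (0:ℝ) < s := hs
      have hsd : (0:ℝ) < s + d := by linarith
      have hu0 : (0:ℝ) < s / (s + d) := div_pos hs0 hsd
      have hu1 : s / (s + d) < 1 := by rw [div_lt_one hsd]; linarith
      linarith [key_ineq (s/(s+d)) p hu0 hu1 hp])

theorem deeper_pool_better_rate (ri ro wi wo dri lam : ℝ)
    (hri : 0 < ri) (hro : 0 < ro) (hwi : 0 < wi) (hwo : 0 < wo)
    (hdri : 0 < dri) (hlam : 1 < lam) :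
    lam * ro * (1 - (lam * ri / (lam * ri + dri)) ^ (wi / wo))
      > ro * (1 - (ri / (ri + dri)) ^ (wi / wo)) := by
  have hp : 0 < wi / wo := div_pos hwi hwo
  have hmono := phi_strictMono dri (wi/wo) hdri hp
  have h1 : ri ∈ Set.Ioi (0:ℝ) := hri
  have h2 : lam * ri ∈ Set.Ioi (0:ℝ) := by
    simp only [Set.mem_Ioi]; positivity
  have hlt : ri < lam * ri := by nlinarith
  have := hmono h1 h2 hlt
  simp only at this
  have hro' : 0 < ro / ri := div_pos hro hri
  have hmul := (mul_lt_mul_iff_right₀ hro').2 this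
  calc ro * (1 - (ri / (ri + dri)) ^ (wi / wo))
      = ro / ri * (ri * (1 - (ri / (ri + dri)) ^ (wi / wo))) := by field_simp
    _ < ro / ri * (lam * ri * (1 - (lam * ri / (lam * ri + dri)) ^ (wi / wo))) := hmul
    _ = lam * ro * (1 - (lam * ri / (lam * ri + dri)) ^ (wi / wo)) := by field_simp
end
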